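/- Tóth's theorem: For every positive integer n, the cyclotomic polynomial Φ_n(z) divides the polynomial T_n(z) = ∑_{r=0}^{n-1} c_n(r) z^r − n, where c_n(r) is the Ramanujan sum. -/
import Mathlib


open Polynomial Finset

/-- The Ramanujan sum `c_n(r) = ∑_{1 ≤ j ≤ n, gcd(j,n)=1} e^{2πijr/n}`. -/
noncomputable def ramanujanSum (n : ℕ) (r : ℤ) : ℂ :=
  ∑ j ∈ Finset.Icc 1 n, if Nat.gcd j n = 1 then
    Complex.exp (2 * (Real.pi : ℂ) * Complex.I * (j : ℂ) * (r : ℂ) / (n : ℂ)) else 0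

lemma toth_key (n : ℕ) (hn : 1 ≤ n) (ζ : ℂ) (hζ : IsPrimitiveRoot ζ n) :
    ∑ r ∈ Finset.range n, ramanujanSum n (r : ℤ) * ζ ^ r = (n : ℂ) := by
  have hn0 : (n : ℕ) ≠ 0 := by omega
  have hnC : (n : ℂ) ≠ 0 := Nat.cast_ne_zero.2 hn0
  set ω : ℂ := Complex.exp (2 * Real.pi * Complex.I / n) with hωdef
  have hω : IsPrimitiveRoot ω n := Complex.isPrimitiveRoot_exp n hn0
  haveI : NeZero n := ⟨hn0⟩
  obtain ⟨k, hklt, hk⟩ := hω.eq_pow_of_pow_eq_one hζ.pow_eq_one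
  have hkcop : Nat.Coprime k n := (hω.pow_iff_coprime (by omega) k).1 (hk ▸ hζ)
  -- rewrite exponentials as powers of ω
  have hterm : ∀ j r : ℕ,
      Complex.exp (2 * (Real.pi : ℂ) * Complex.I * (j : ℂ) * ((r : ℤ) : ℂ) / (n : ℂ))
        = ω ^ (j * r) := by
    intro j r
    rw [hωdef, ← Complex.exp_nat_mul]
    push_cast
    ring_nf
  have expand : ∑ r ∈ Finset.range n, ramanujanSum n (r : ℤ) * ζ ^ r
      = ∑ j ∈ Finset.Icc 1 n, if Nat.gcd j n = 1 then
          (∑ r ∈ Finset.range n, (ω ^ j * ζ) ^ r) else 0 := by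
    unfold ramanujanSum
    simp_rw [Finset.sum_mul]
    rw [Finset.sum_comm]
    refine Finset.sum_congr rfl fun j _ => ?_
    by_cases h : Nat.gcd j n = 1
    · simp only [if_pos h]
      refine Finset.sum_congr rfl fun r _ => ?_
      rw [hterm j r, mul_pow, ← pow_mul]
    · simp [h]
  rw [expand]
  have geom : ∀ j : ℕ, (∑ r ∈ Finset.range n, (ω ^ j * ζ) ^ r)
      = if n ∣ j + k then (n : ℂ) else 0 := by
    intro j
    have hx : ω ^ j * ζ = ω ^ (j + k) := by rw [pow_add, hk]
    by_cases h : n ∣ j + k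
    · rw [if_pos h, hx, (hω.pow_eq_one_iff_dvd _).2 h]
      simp
    · rw [if_neg h]
      have hne : ω ^ j * ζ ≠ 1 := by
        rw [Ne, hx, hω.pow_eq_one_iff_dvd]; exact h
      rw [geom_sum_eq hne]
      have : (ω ^ j * ζ) ^ n = 1 := by
        rw [mul_pow, ← pow_mul, mul_comm j n, pow_mul, hω.pow_eq_one, one_pow, hζ.pow_eq_one,
          one_mul]
      rw [this]
      simp
  simp_rw [geom]
  rw [Finset.sum_eq_single (n - k)]
  · have h1 : Nat.Coprime (n - k) n := by
      have h2 : Nat.Coprime (n - k) k := (Nat.coprime_sub_self_left hklt.le).2 hkcop.symm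
      have h5 : (n - k).Coprime (k + (n - k)) := Nat.coprime_add_self_right.2 h2
      rwa [show k + (n - k) = n from by omega] at h5
    rw [if_pos h1, if_pos (by rw [Nat.sub_add_cancel hklt.le])]
  · intro j hj hjne
    simp only [Finset.mem_Icc] at hj
    have : ¬ n ∣ j + k := by
      intro hdvd
      obtain ⟨c, hc⟩ := hdvd
      have hc1 : 1 ≤ c := by nlinarith [hj.1, hj.2]
      have hc2 : c < 2 := by nlinarith [hj.1, hj.2]
      interval_cases c; omega
    rw [if_neg this, ite_self]
  · intro h
    exfalso
    apply h
    simp only [Finset.mem_Icc]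
    omega

theorem toth_divisibility (n : ℕ) (hn : 1 ≤ n) :
    Polynomial.cyclotomic n ℂ ∣
      (∑ r ∈ Finset.range n, C (ramanujanSum n r) * X ^ r) - C (n : ℂ) := by
  have hn0 : n ≠ 0 := by omega
  have hω : IsPrimitiveRoot (Complex.exp (2 * Real.pi * Complex.I / n)) n :=
    Complex.isPrimitiveRoot_exp n hn0
  rw [cyclotomic_eq_prod_X_sub_primitiveRoots hω]
  refine Finset.prod_dvd_of_coprime ?_ ?_
  · intro a ha b hb hab
    exact Polynomial.isCoprime_X_sub_C_of_isUnit_sub ((sub_ne_zero_of_ne hab).isUnit)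
  · intro μ hμ
    have hprim : IsPrimitiveRoot μ n := (mem_primitiveRoots (by omega)).1 hμ
    rw [dvd_iff_isRoot, IsRoot.def]
    simp only [eval_sub, eval_finset_sum, eval_mul, eval_C, eval_pow, eval_X]
    rw [toth_key n hn μ hprim]
    ring
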